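/- arXiv:1611.09914 — 2 statements merged into one kernel-verified Lean document; each statement's English description precedes it below -/
import Mathlib

section
/- Plotkin-type bound for batch/PIR codes: let G be a k×n matrix over a finite field F_q with property A_t. If q·t > (q−1)·n, then q^k ≤ ⌊ q·t / (q·t − (q−1)·n) ⌋. -/
/-- Some `F`-linear combination of the columns of `G` indexed by `T` equals the vector `v`. -/
def ColLinComb {F : Type*} [Field F] {k n : ℕ} (G : Matrix (Fin k) (Fin n) F)
    (T : Finset (Fin n)) (v : Fin k → F) : Prop :=
  ∃ c : Fin n → F, ∑ j ∈ T, c j • G.transpose j = v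

/-- `G` has property `A_t` (generates a `t`-server PIR code). -/
def PropertyA {F : Type*} [Field F] {k n : ℕ} (G : Matrix (Fin k) (Fin n) F) (t : ℕ) : Prop :=
  ∀ i : Fin k, ∃ T : Fin t → Finset (Fin n),
    (∀ j₁ j₂ : Fin t, j₁ ≠ j₂ → Disjoint (T j₁) (T j₂)) ∧
    ∀ j : Fin t, ColLinComb G (T j) (Pi.single i 1)

/-!
Double count the pairs `(z, m)` with `(z G)_m ≠ 0`. Property `A_t` gives every nonzero
message `z` weight at least `t`: if `z_i ≠ 0`, each recovery set for `e_i` must contain a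
coordinate where `z G` is nonzero, since `z_i` is a combination of those coordinates. On the
other hand each coordinate `z ↦ (z G)_m` is a linear functional, which is nonzero on at most
a fraction `(q - 1)/q` of all messages. Hence `q t (q^k - 1) ≤ (q - 1) n q^k`, which
rearranges to the bound.
-/

open Finset Matrix

theorem Nat.le_div_sub_of_mul_sub_one_le {A B M : ℕ} (hBA : B < A)
    (h : A * (M - 1) ≤ B * M) : M ≤ A / (A - B) := by
  obtain ⟨D, rfl⟩ := Nat.exists_eq_add_of_lt hBA
  rw [Nat.le_div_iff_mul_le (by omega), show B + D + 1 - B = D + 1 by omega]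
  rcases M with _ | m
  · simp
  · rw [Nat.add_sub_cancel] at h
    linarith

theorem Fintype.card_le_card_of_disjoint_of_exists_mem {ι α : Type*} [Fintype ι]
    {T : ι → Finset α} {s : Finset α} (hT : ∀ j₁ j₂, j₁ ≠ j₂ → Disjoint (T j₁) (T j₂))
    (hs : ∀ j, ∃ a ∈ T j, a ∈ s) : Fintype.card ι ≤ #s := by
  choose f hfT hfs using hs
  refine card_le_card_of_injOn f (fun j _ => hfs j) fun j₁ _ j₂ _ hf => ?_
  by_contra hne
  exact disjoint_left.mp (hT j₁ j₂ hne) (hfT j₁) (hf ▸ hfT j₂)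

theorem sum_hammingNorm_eq_sum_card {α ι β : Type*} [Fintype α] [Fintype ι] [Zero β]
    [DecidableEq β] (f : α → ι → β) :
    ∑ a, hammingNorm (f a) = ∑ i, #{a | f a i ≠ 0} := by
  simp only [hammingNorm, card_filter]
  exact sum_comm

theorem LinearMap.card_mul_card_ne_zero_le {F V : Type*} [Field F] [Fintype F] [DecidableEq F]
    [AddCommGroup V] [Module F V] [Fintype V] (f : V →ₗ[F] F) :
    Fintype.card F * #{v | f v ≠ 0} ≤ (Fintype.card F - 1) * Fintype.card V := by
  have hker : #{v | f v = 0} = Nat.card (ker f) :=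
    calc #{v | f v = 0} = Nat.card {v // f v = 0} := by
          rw [Nat.card_eq_fintype_card, Fintype.card_subtype]
      _ = Nat.card (ker f) := Nat.card_congr (Equiv.subtypeEquivRight fun _ => mem_ker.symm)
  have hquot : Nat.card (V ⧸ ker f) ≤ Fintype.card F := by
    rw [Nat.card_congr f.quotKerEquivRange.toEquiv, ← Nat.card_eq_fintype_card]
    exact Nat.card_le_card_of_injective _ Subtype.val_injective
  have hV : Fintype.card V ≤ Fintype.card F * #{v | f v = 0} := by
    rw [← Nat.card_eq_fintype_card, (ker f).card_eq_card_quotient_mul_card, hker, mul_comm]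
    exact Nat.mul_le_mul_right _ hquot
  have hsplit := card_filter_add_card_filter_not (s := univ) fun v => f v = 0
  rw [card_univ] at hsplit
  rw [Nat.sub_one_mul]
  apply Nat.le_sub_of_add_le
  rw [← hsplit]
  linarith

section PIR

variable {F : Type*} [Field F] {k n : ℕ}

theorem dotProduct_eq_sum_vecMul {G : Matrix (Fin k) (Fin n) F} {T : Finset (Fin n)}
    {v : Fin k → F} {c : Fin n → F} (hc : ∑ j ∈ T, c j • Gᵀ j = v) (z : Fin k → F) :
    z ⬝ᵥ v = ∑ j ∈ T, c j * (z ᵥ* G) j := by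
  rw [← hc, dotProduct_sum]
  refine sum_congr rfl fun j _ => ?_
  rw [dotProduct_smul, smul_eq_mul]
  rfl

theorem ColLinComb.exists_vecMul_ne_zero {G : Matrix (Fin k) (Fin n) F} {T : Finset (Fin n)}
    {v : Fin k → F} (h : ColLinComb G T v) {z : Fin k → F} (hz : z ⬝ᵥ v ≠ 0) :
    ∃ j ∈ T, (z ᵥ* G) j ≠ 0 := by
  obtain ⟨c, hc⟩ := h
  by_contra! hzero
  exact hz <| (dotProduct_eq_sum_vecMul hc z).trans <|
    sum_eq_zero fun j hj => by rw [hzero j hj, mul_zero]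

theorem PropertyA.le_hammingNorm_vecMul [DecidableEq F] {G : Matrix (Fin k) (Fin n) F}
    {t : ℕ} (hA : PropertyA G t) {z : Fin k → F} (hz : z ≠ 0) :
    t ≤ hammingNorm (z ᵥ* G) := by
  obtain ⟨i, hi⟩ := Function.ne_iff.mp hz
  obtain ⟨T, hdisj, hcomb⟩ := hA i
  simpa [hammingNorm] using Fintype.card_le_card_of_disjoint_of_exists_mem hdisj fun j => by
    simpa using (hcomb j).exists_vecMul_ne_zero (by simpa using hi)

theorem PropertyA.card_sub_one_mul_le_sum_hammingNorm [Fintype F] [DecidableEq F]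
    {G : Matrix (Fin k) (Fin n) F} {t : ℕ} (hA : PropertyA G t) :
    (Fintype.card F ^ k - 1) * t ≤ ∑ z : Fin k → F, hammingNorm (z ᵥ* G) := by
  have hcard : #((univ : Finset (Fin k → F)).erase 0) = Fintype.card F ^ k - 1 := by
    rw [card_erase_of_mem (mem_univ 0), card_univ, Fintype.card_fun, Fintype.card_fin]
  calc (Fintype.card F ^ k - 1) * t = #((univ : Finset (Fin k → F)).erase 0) • t := by
        rw [hcard, smul_eq_mul]
    _ ≤ ∑ z ∈ univ.erase 0, hammingNorm (z ᵥ* G) :=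
        card_nsmul_le_sum _ _ _ fun z hz => hA.le_hammingNorm_vecMul (ne_of_mem_erase hz)
    _ ≤ ∑ z : Fin k → F, hammingNorm (z ᵥ* G) := sum_le_sum_of_subset (erase_subset _ _)

theorem card_mul_sum_hammingNorm_vecMul_le [Fintype F] [DecidableEq F]
    (G : Matrix (Fin k) (Fin n) F) :
    Fintype.card F * ∑ z : Fin k → F, hammingNorm (z ᵥ* G) ≤
      n * ((Fintype.card F - 1) * Fintype.card F ^ k) := by
  rw [sum_hammingNorm_eq_sum_card, mul_sum]
  calc ∑ m, Fintype.card F * #{z : Fin k → F | (z ᵥ* G) m ≠ 0}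
      ≤ ∑ _m : Fin n, (Fintype.card F - 1) * Fintype.card F ^ k := by
        refine sum_le_sum fun m _ => ?_
        refine (((LinearMap.proj m).comp (vecMulLinear G)).card_mul_card_ne_zero_le).trans_eq ?_
        rw [Fintype.card_fun, Fintype.card_fin]
    _ = n * ((Fintype.card F - 1) * Fintype.card F ^ k) := by simp

end PIR

/-- **Plotkin-type bound for batch/PIR codes.**  If a `k×n` matrix `G` over `F_q` has
property `A_t` and `q·t > (q−1)·n`, then `q^k ≤ ⌊q·t / (q·t − (q−1)·n)⌋`. -/
theorem plotkin_bound_PIR {F : Type*} [Field F] [Fintype F] {k n t : ℕ}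
    (G : Matrix (Fin k) (Fin n) F) (hA : PropertyA G t)
    (hq : Fintype.card F * t > (Fintype.card F - 1) * n) :
    Fintype.card F ^ k ≤
      Fintype.card F * t / (Fintype.card F * t - (Fintype.card F - 1) * n) := by
  classical
  set q := Fintype.card F
  apply Nat.le_div_sub_of_mul_sub_one_le hq
  calc q * t * (q ^ k - 1) = q * ((q ^ k - 1) * t) := by ring
    _ ≤ q * ∑ z : Fin k → F, hammingNorm (z ᵥ* G) :=
        Nat.mul_le_mul_left _ hA.card_sub_one_mul_le_sum_hammingNorm
    _ ≤ n * ((q - 1) * q ^ k) := card_mul_sum_hammingNorm_vecMul_le G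
    _ = (q - 1) * n * q ^ k := by ring
end

section
/- Let G = [I_k | A] be a systematic k×n generator matrix over F_q generating an [n,k,t] batch code with reconstruction sets of size at most r, where t ≥ 2 and r ≥ 1, and let d be the minimum Hamming distance of the code {x·G : x ∈ F_q^k}. Then n ≥ k + d + max_{2 ≤ β ≤ t, β ∈ ℕ} { (β−1)·(⌈ k/(r·β − β − r + 2) ⌉ − 1) } − 1. -/
/-- `G` generates an `[n,k,t]` batch code with reconstruction sets of size at most `r`. -/
def IsBatchCodeWith {F : Type*} [Field F] {k n : ℕ} (G : Matrix (Fin k) (Fin n) F)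
    (t r : ℕ) : Prop :=
  ∀ idx : Fin t → Fin k, ∃ T : Fin t → Finset (Fin n),
    (∀ j₁ j₂ : Fin t, j₁ ≠ j₂ → Disjoint (T j₁) (T j₂)) ∧
    ∀ j : Fin t, (T j).card ≤ r ∧ ColLinComb G (T j) (Pi.single (idx j) 1)

/-!
Greedily build a set `I` of columns of `G` whose excess `#I - rank I` grows while its rank stays
below `k`. Given `I` with `rank I < k`, pick a unit vector `e_i ∉ span I` and request it `t` times.
At most one of the `t` disjoint recovery sets contains the systematic column of `e_i`, so `β - 1`
of them avoid it; adjoining these and that column raises the excess by `β - 1` and the rank by at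
most `s = (β - 1)(r - 1) + 1`. After `⌈k/s⌉ - 1` rounds, extend `I` to rank exactly `k - 1` without
losing excess: a nonzero message orthogonal to these columns encodes to a codeword vanishing on
`I`, whence `d ≤ n - #I`.
-/
open Module Submodule Finset
open scoped Matrix

section SpanRank

variable {F W ι : Type*} [Field F] [AddCommGroup W] [Module F W] (v : ι → W)

lemma span_image_union [DecidableEq ι] (X S : Finset ι) :
    span F (v '' ↑(X ∪ S)) = span F (v '' ↑X) ⊔ span F (v '' ↑S) := by
  rw [coe_union, Set.image_union, span_union]

lemma finrank_span_image_le_card (S : Finset ι) : (v '' ↑S).finrank F ≤ #S := by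
  classical
  rw [← coe_image]
  exact (finrank_span_finset_le_card _).trans card_image_le

variable [FiniteDimensional F W] [DecidableEq ι]

lemma finrank_span_image_union_add_finrank_inf (X S : Finset ι) :
    (v '' ↑(X ∪ S)).finrank F + finrank F ↥(span F (v '' ↑X) ⊓ span F (v '' ↑(S \ X))) ≤
      (v '' ↑X).finrank F + #(S \ X) := by
  rw [← union_sdiff_self_eq_union, Set.finrank, span_image_union,
    finrank_sup_add_finrank_inf_eq]
  exact Nat.add_le_add_left (finrank_span_image_le_card v _) _

lemma finrank_span_image_union_le (X S : Finset ι) :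
    (v '' ↑(X ∪ S)).finrank F ≤ (v '' ↑X).finrank F + #(S \ X) :=
  (Nat.le_add_right _ _).trans (finrank_span_image_union_add_finrank_inf v X S)

/-- Writing `e = b + a` with `b` spanned by `S \ X` and `a` by `S ∩ X`, the vector `b = e - a`
is a nonzero common element of the spans of `X` and `S \ X`. -/
lemma finrank_span_image_union_add_one_le {e : W} {X S : Finset ι}
    (heX : e ∈ span F (v '' ↑X)) (heS : e ∈ span F (v '' ↑S))
    (heSX : e ∉ span F (v '' ↑(S ∩ X))) :
    (v '' ↑(X ∪ S)).finrank F + 1 ≤ (v '' ↑X).finrank F + #(S \ X) := by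
  rw [← sdiff_union_inter S X, span_image_union, Submodule.mem_sup] at heS
  obtain ⟨b, hb, a, ha, rfl⟩ := heS
  have hbX : b ∈ span F (v '' ↑X) := by
    have haX : a ∈ span F (v '' ↑X) := span_mono (Set.image_mono (by simp)) ha
    simpa using sub_mem heX haX
  have hb0 : b ≠ 0 := by rintro rfl; simp_all
  have hinf : 1 ≤ finrank F ↥(span F (v '' ↑X) ⊓ span F (v '' ↑(S \ X))) :=
    one_le_finrank_iff.mpr ((Submodule.ne_bot_iff _).mpr ⟨b, ⟨hbX, hb⟩, hb0⟩)
  have := finrank_span_image_union_add_finrank_inf (F := F) v X S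
  omega

lemma finrank_span_image_insert_le (X : Finset ι) (i : ι) :
    (v '' ↑(insert i X)).finrank F ≤ (v '' ↑X).finrank F + 1 := by
  have hrank := finrank_span_image_union_le (F := F) v X {i}
  rw [union_singleton] at hrank
  have hcard : #({i} \ X) ≤ 1 := (card_le_card sdiff_subset).trans (card_singleton i).le
  omega

lemma finrank_span_image_add_card_le_of_subset {X Y : Finset ι} (hXY : X ⊆ Y) :
    (v '' ↑Y).finrank F + #X ≤ (v '' ↑X).finrank F + #Y := by
  have hrank := finrank_span_image_union_le (F := F) v X Y
  rw [union_eq_right.mpr hXY] at hrank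
  have hcard := card_sdiff_add_card_eq_card hXY
  omega

/-- Each set `T j` meets the current set only inside `X`, where it cannot produce `e`; since `e`
is already spanned, adjoining `T j` costs at least one column more than it adds to the rank. -/
lemma finrank_span_image_union_biUnion_add_card_le {κ : Type*} [DecidableEq κ] {e : W}
    {X : Finset ι} (heX : e ∈ span F (v '' ↑X)) (T : κ → Finset ι) (J : Finset κ)
    (hdisj : (J : Set κ).PairwiseDisjoint T) (heT : ∀ j ∈ J, e ∈ span F (v '' ↑(T j)))
    (heTX : ∀ j ∈ J, e ∉ span F (v '' ↑(T j ∩ X))) :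
    (v '' ↑(X ∪ J.biUnion T)).finrank F + #J + #X ≤
      (v '' ↑X).finrank F + #(X ∪ J.biUnion T) := by
  induction J using Finset.induction_on with
  | empty => simp
  | @insert a J haJ ih =>
    set Y := X ∪ J.biUnion T
    have hdisjJ : (J : Set κ).PairwiseDisjoint T :=
      hdisj.subset (by simp [Set.subset_insert])
    have hTa : Disjoint (T a) (J.biUnion T) := by
      refine (disjoint_biUnion_right _ _ _).mpr fun j hj ↦ hdisj (by simp) (by simp [hj]) ?_
      rintro rfl
      exact haJ hj
    have hunion : X ∪ (insert a J).biUnion T = Y ∪ T a := by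
      rw [biUnion_insert, union_left_comm, union_comm (T a)]
    have hinter : T a ∩ Y = T a ∩ X := by
      rw [inter_union_distrib_left, disjoint_iff_inter_eq_empty.mp hTa, union_empty]
    have heY : e ∈ span F (v '' ↑Y) :=
      span_mono (Set.image_mono (coe_subset.mpr subset_union_left)) heX
    have hstep := finrank_span_image_union_add_one_le v heY (heT a (mem_insert_self a J))
      (hinter ▸ heTX a (mem_insert_self a J))
    have hcard := card_sdiff_add_card (T a) Y
    rw [union_comm] at hcard
    have hIH := ih hdisjJ (fun j hj ↦ heT j (mem_insert_of_mem hj))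
      (fun j hj ↦ heTX j (mem_insert_of_mem hj))
    rw [hunion, card_insert_of_notMem haJ]
    omega

lemma exists_superset_finrank_span_image_eq [Fintype ι] (X : Finset ι) {m : ℕ}
    (hXm : (v '' ↑X).finrank F ≤ m) (hm : m ≤ (Set.range v).finrank F) :
    ∃ Y, X ⊆ Y ∧ (v '' ↑Y).finrank F = m := by
  induction m, hXm using Nat.le_induction with
  | base => exact ⟨X, Subset.rfl, rfl⟩
  | succ m _ ih =>
    obtain ⟨Y, hXY, hY⟩ := ih (by omega)
    obtain ⟨i, hi⟩ : ∃ i, v i ∉ span F (v '' ↑Y) := by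
      by_contra! hall
      have : (Set.range v).finrank F ≤ (v '' ↑Y).finrank F :=
        Submodule.finrank_mono (span_le.mpr (Set.range_subset_iff.mpr hall))
      omega
    have hle := finrank_span_image_insert_le (F := F) v Y i
    have hlt : (v '' ↑Y).finrank F < (v '' ↑(insert i Y)).finrank F := by
      refine Submodule.finrank_lt_finrank_of_lt (lt_of_le_of_ne ?_ fun h ↦ hi ?_)
      · exact span_mono (Set.image_mono (by simp))
      · exact h ▸ subset_span ⟨i, by simp, rfl⟩
    exact ⟨insert i Y, hXY.trans (subset_insert i Y), by omega⟩

end SpanRank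

lemma exists_single_notMem_of_finrank_lt {F ι : Type*} [Field F] [Fintype ι] [DecidableEq ι]
    (p : Submodule F (ι → F)) (hp : finrank F p < Fintype.card ι) :
    ∃ i, Pi.single i (1 : F) ∉ p := by
  by_contra! hall
  have htop : p = ⊤ := top_le_iff.mp <| (Pi.basisFun F ι).span_eq ▸
    span_le.mpr (Set.range_subset_iff.mpr fun i ↦ by simpa using hall i)
  rw [htop, finrank_top, finrank_fintype_fun_eq_card] at hp
  exact hp.false

lemma hammingNorm_add_card_le {ι β : Type*} [Fintype ι] [Zero β] [DecidableEq β]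
    {y : ι → β} {J : Finset ι} (hy : ∀ j ∈ J, y j = 0) :
    hammingNorm y + #J ≤ Fintype.card ι := by
  classical
  have hsupp : ({i | y i ≠ 0} : Finset ι) ⊆ Jᶜ := by
    intro i hi
    simp only [mem_filter, mem_univ, true_and] at hi
    exact mem_compl.mpr fun hiJ ↦ hi (hy i hiJ)
  have := card_le_card hsupp
  rw [card_compl] at this
  have := card_le_univ J
  unfold hammingNorm
  omega

section Code

variable {F : Type*} [Field F] {k n : ℕ} (G : Matrix (Fin k) (Fin n) F)

lemma mem_span_of_colLinComb {T : Finset (Fin n)} {w : Fin k → F} (h : ColLinComb G T w) :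
    w ∈ span F (Gᵀ '' ↑T) := by
  obtain ⟨c, rfl⟩ := h
  exact sum_mem fun j hj ↦ smul_mem _ _ (subset_span ⟨j, hj, rfl⟩)

/-- A nonzero functional vanishing on the columns in `J` is `w ↦ x ⬝ᵥ w` for some `x ≠ 0`. -/
lemma exists_ne_zero_vecMul_eq_zero {J : Finset (Fin n)} (hJ : (Gᵀ '' ↑J).finrank F < k) :
    ∃ x ≠ 0, ∀ j ∈ J, (x ᵥ* G) j = 0 := by
  have hlt : span F (Gᵀ '' ↑J) < ⊤ := by
    refine lt_top_iff_ne_top.mpr fun h ↦ ?_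
    rw [Set.finrank, h, finrank_top, finrank_fin_fun] at hJ
    exact hJ.false
  obtain ⟨f, hf0, hf⟩ := (span F (Gᵀ '' ↑J)).exists_le_ker_of_lt_top hlt
  have hfx : ∀ w, f w = ∑ i, w i * f (Pi.single i 1) := fun w ↦ by
    conv_lhs => rw [pi_eq_sum_univ' w]
    simp [map_sum]
  refine ⟨fun i ↦ f (Pi.single i 1), fun hx ↦ hf0 (LinearMap.ext fun w ↦ ?_), fun j hj ↦ ?_⟩
  · simp only [funext_iff, Pi.zero_apply] at hx
    simp [hfx w, hx]
  · have := hf (subset_span ⟨j, hj, rfl⟩)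
    rw [LinearMap.mem_ker, hfx] at this
    simpa [Matrix.vecMul, dotProduct, mul_comm] using this

lemma finrank_span_range_transpose {c : Fin k → Fin n} (hc : ∀ i, Gᵀ (c i) = Pi.single i 1) :
    (Set.range Gᵀ).finrank F = k := by
  refine le_antisymm ((Submodule.finrank_le _).trans_eq (finrank_fin_fun F))
    (not_lt.mp fun h ↦ ?_)
  obtain ⟨i, hi⟩ := exists_single_notMem_of_finrank_lt _ (h.trans_eq (Fintype.card_fin k).symm)
  exact hi (hc i ▸ subset_span ⟨c i, rfl⟩)

lemma add_card_le_of_finrank_span_lt [DecidableEq F] (hG : (Set.range Gᵀ).finrank F = k) {d : ℕ}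
    (hd : ∀ x ≠ 0, d ≤ hammingNorm (x ᵥ* G)) {I : Finset (Fin n)}
    (hI : (Gᵀ '' ↑I).finrank F < k) :
    d + k + #I ≤ n + 1 + (Gᵀ '' ↑I).finrank F := by
  obtain ⟨J, hIJ, hJ⟩ := exists_superset_finrank_span_image_eq (F := F) Gᵀ I (m := k - 1)
    (by omega) (by omega)
  have hexcess := finrank_span_image_add_card_le_of_subset (F := F) Gᵀ hIJ
  obtain ⟨x, hx0, hxJ⟩ := exists_ne_zero_vecMul_eq_zero G (J := J) (by omega)
  have hweight := hammingNorm_add_card_le hxJ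
  rw [Fintype.card_fin] at hweight
  have := hd x hx0
  omega

variable {G} {c : Fin k → Fin n} {t r m : ℕ}

lemma exists_finrank_add_le_of_isBatchCodeWith (hc : ∀ i, Gᵀ (c i) = Pi.single i 1)
    (hB : IsBatchCodeWith G t r) (hmt : m < t) {I : Finset (Fin n)}
    (hI : (Gᵀ '' ↑I).finrank F < k) :
    ∃ I' : Finset (Fin n), (Gᵀ '' ↑I').finrank F + m + #I ≤ (Gᵀ '' ↑I).finrank F + #I' ∧
      #I' ≤ #I + 1 + m * r := by
  obtain ⟨i, hi⟩ := exists_single_notMem_of_finrank_lt (span F (Gᵀ '' ↑I))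
    (hI.trans_eq (Fintype.card_fin k).symm)
  obtain ⟨T, hTdisj, hT⟩ := hB fun _ ↦ i
  have hfree : m ≤ #{j | c i ∉ T j} := by
    have hle : #{j | c i ∈ T j} ≤ 1 := card_le_one.mpr fun a ha b hb ↦ by_contra fun hab ↦
      disjoint_left.mp (hTdisj a b hab) (mem_filter.mp ha).2 (mem_filter.mp hb).2
    have := card_filter_add_card_filter_not (s := univ) (fun j ↦ c i ∈ T j)
    simp only [card_univ, Fintype.card_fin] at this
    omega
  obtain ⟨J, hJfree, hJcard⟩ := exists_subset_card_eq hfree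
  have hciI : c i ∉ I := fun h ↦ hi (hc i ▸ subset_span ⟨c i, h, rfl⟩)
  set X := insert (c i) I
  have heX : Pi.single i 1 ∈ span F (Gᵀ '' ↑X) := hc i ▸ subset_span ⟨c i, by simp [X], rfl⟩
  have hTX : ∀ j ∈ J, T j ∩ X ⊆ I := fun j hj x hx ↦ by
    have hcj : c i ∉ T j := (mem_filter.mp (hJfree hj)).2
    obtain ⟨hxT, hxX⟩ := mem_inter.mp hx
    exact (mem_insert.mp hxX).resolve_left (by rintro rfl; exact hcj hxT)
  have hexcess := finrank_span_image_union_biUnion_add_card_le Gᵀ heX T J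
    (fun a _ b _ hab ↦ hTdisj a b hab) (fun j _ ↦ mem_span_of_colLinComb G (hT j).2)
    (fun j hj h ↦ hi (span_mono (Set.image_mono (coe_subset.mpr (hTX j hj))) h))
  have hX : (Gᵀ '' ↑X).finrank F ≤ (Gᵀ '' ↑I).finrank F + 1 :=
    finrank_span_image_insert_le Gᵀ I (c i)
  have hcard : #(X ∪ J.biUnion T) ≤ #I + 1 + m * r := calc
    _ ≤ #X + #(J.biUnion T) := card_union_le _ _
    _ ≤ #I + 1 + ∑ j ∈ J, #(T j) := add_le_add (card_insert_le _ _) card_biUnion_le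
    _ ≤ #I + 1 + m * r := by
      grw [sum_le_card_nsmul J _ r fun j _ ↦ (hT j).1, hJcard, smul_eq_mul]
  refine ⟨X ∪ J.biUnion T, ?_, hcard⟩
  rw [card_insert_of_notMem hciI] at hexcess
  omega

lemma exists_finrank_le_mul_of_isBatchCodeWith (hc : ∀ i, Gᵀ (c i) = Pi.single i 1)
    (hB : IsBatchCodeWith G t r) (hmt : m < t) {s : ℕ} (hs : m * r + 1 ≤ m + s) :
    ∀ N, N * s < k → ∃ I : Finset (Fin n),
      (Gᵀ '' ↑I).finrank F ≤ N * s ∧ (Gᵀ '' ↑I).finrank F + m * N ≤ #I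
  | 0, _ => by
    have := finrank_span_image_le_card (F := F) Gᵀ ∅
    exact ⟨∅, by simpa using this, by simpa using this⟩
  | N + 1, hN => by
    rw [add_one_mul] at hN
    obtain ⟨I, hrank, hcard⟩ :=
      exists_finrank_le_mul_of_isBatchCodeWith hc hB hmt hs N (by omega)
    obtain ⟨I', hexcess, hcard'⟩ := exists_finrank_add_le_of_isBatchCodeWith hc hB hmt
      (I := I) (by omega)
    refine ⟨I', ?_, ?_⟩
    · rw [add_one_mul]
      omega
    · rw [mul_add_one]
      omega

end Code

lemma ceil_natCast_div_sub_one {k s : ℕ} (hk : 0 < k) (hs : 0 < s) :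
    ⌈(k : ℚ) / s⌉ - 1 = ((k - 1) / s : ℕ) := by
  have hsQ : (0 : ℚ) < s := by exact_mod_cast hs
  have hlow := Nat.div_mul_le_self (k - 1) s
  have hhigh := Nat.lt_div_mul_add (a := k - 1) hs
  rw [sub_eq_iff_eq_add, Int.ceil_eq_iff]
  push_cast
  constructor
  · rw [add_sub_cancel_right, lt_div_iff₀ hsQ]
    exact_mod_cast (show (k - 1) / s * s < k by omega)
  · rw [div_le_iff₀ hsQ]
    exact_mod_cast (show k ≤ ((k - 1) / s + 1) * s by rw [add_one_mul]; omega)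

theorem bound_batch_restricted_systematic_general {F : Type*} [Field F] [DecidableEq F]
    {k n t r d : ℕ} (hr : 1 ≤ r)
    (G : Matrix (Fin k) (Fin n) F) (hkn : k ≤ n)
    (hsys : ∀ i j : Fin k, G i (Fin.castLE hkn j) = if i = j then 1 else 0)
    (hB : IsBatchCodeWith G t r)
    (hd : IsLeast {w : ℕ | ∃ x : Fin k → F, x ≠ 0 ∧ hammingNorm (Matrix.vecMul x G) = w} d) :
    ∀ β : ℕ, 2 ≤ β → β ≤ t →
      (k : ℤ) + d + ((β : ℤ) - 1) *
          (⌈(k : ℚ) / ((r : ℚ) * β - β - r + 2)⌉ - 1) - 1 ≤ (n : ℤ) := by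
  intro β hβ2 hβt
  obtain ⟨r', rfl⟩ : ∃ r', r = r' + 1 := ⟨r - 1, by omega⟩
  obtain ⟨m, rfl⟩ : ∃ m, β = m + 1 := ⟨β - 1, by omega⟩
  have hk : 0 < k := by
    obtain ⟨x, hx, -⟩ := hd.1
    exact Nat.pos_of_ne_zero fun hk ↦ hx (funext fun i ↦ (hk ▸ i).elim0)
  have hc : ∀ i, Gᵀ (Fin.castLE hkn i) = Pi.single i 1 := fun i ↦
    funext fun i' ↦ by simp [hsys, Pi.single_apply]
  obtain ⟨N, hN⟩ : ∃ N, (k - 1) / (m * r' + 1) = N := ⟨_, rfl⟩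
  have hNk : N * (m * r' + 1) < k := hN ▸ (Nat.div_mul_le_self _ _).trans_lt (by omega)
  obtain ⟨I, hIrank, hIcard⟩ := exists_finrank_le_mul_of_isBatchCodeWith hc hB (m := m)
    (s := m * r' + 1) (by omega) (by ring_nf; omega) N hNk
  have hsingleton := add_card_le_of_finrank_span_lt G (finrank_span_range_transpose G hc)
    (fun x hx ↦ hd.2 ⟨x, hx, rfl⟩) (I := I) (by omega)
  have hden : ((r' + 1 : ℕ) : ℚ) * (m + 1 : ℕ) - (m + 1 : ℕ) - (r' + 1 : ℕ) + 2 =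
      (m * r' + 1 : ℕ) := by
    push_cast; ring
  rw [hden, ceil_natCast_div_sub_one hk (by omega), hN]
  have hbound : (d : ℤ) + k + m * N ≤ n + 1 := by
    exact_mod_cast (show d + k + m * N ≤ n + 1 by omega)
  push_cast
  linarith

/-- **Bound for systematic batch codes with restricted reconstruction sets
(Zhang–Skachek).**  If a systematic `G = [I_k | A]` generates an `[n,k,t]` batch code with
reconstruction sets of size at most `r` (`t ≥ 2`, `r ≥ 1`), and `d` is the minimum
distance, then for every `2 ≤ β ≤ t`,
`n ≥ k + d + (β−1)·(⌈k/(r·β−β−r+2)⌉ − 1) − 1`; that is, `n` is at least the maximum of the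
right-hand side over `2 ≤ β ≤ t`. -/
theorem bound_batch_restricted_systematic {F : Type*} [Field F] [Fintype F] [DecidableEq F]
    {k n t r d : ℕ} (ht : 2 ≤ t) (hr : 1 ≤ r)
    (G : Matrix (Fin k) (Fin n) F) (hkn : k ≤ n)
    (hsys : ∀ i j : Fin k, G i (Fin.castLE hkn j) = if i = j then 1 else 0)
    (hB : IsBatchCodeWith G t r)
    (hd : IsLeast {w : ℕ | ∃ x : Fin k → F, x ≠ 0 ∧ hammingNorm (Matrix.vecMul x G) = w} d) :
    ∀ β : ℕ, 2 ≤ β → β ≤ t →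
      (k : ℤ) + d + ((β : ℤ) - 1) *
          (⌈(k : ℚ) / ((r : ℚ) * β - β - r + 2)⌉ - 1) - 1 ≤ (n : ℤ) :=
  bound_batch_restricted_systematic_general hr G hkn hsys hB hd
end
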